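/- Let z₀ ∈ ℂ and let φ : ℂ → ℝ be nonnegative, integrable on B(z₀,e), and have global finite mean oscillation at z₀ with maximal dispersion δ∞ = sup_{R > e^e} (1/m(B(z₀,R))) ∫_{B(z₀,R)} |φ − φ̄_R| dm < ∞. Then for every R > e^e, ∫_{A(z₀,e,R)} φ(z) / (|z − z₀| log|z − z₀|)² dm(z) ≤ C · log log R, where C = (π/6)((24 + π²)e²δ∞ + 2π²φ₀) and φ₀ is the mean value of φ over B(z₀,e). -/

import Mathlib

/-!
Cut the region `e < |z - z₀| < R` into the annulus `e ≤ |z - z₀| < e^b`, with `b = 68/25` a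
rational just above `e` (so that `δ∞` controls the oscillation at every radius `e^(b+k)`), and
unit annuli `e^(b+k) ≤ |z - z₀| < e^(b+k+1)`. On an annulus `e^u ≤ |z - z₀| < e^v` write
`φ ≤ (φ - φ̄)⁺ + φ̄`, with `φ̄` the mean over `B(z₀, e^v)`: the positive part integrates to half the
mean oscillation times the area of the disk and meets a weight at most `1/(e^u u)²`, while the
weight itself integrates to `2π(1/u - 1/v)` over the annulus. Passing from the mean over
`B(z₀, e^u)` to the one over `B(z₀, e^v)` costs at most `e^(2(v-u)) δ∞/2`, so the means grow by
`e² δ∞/2` per unit annulus, and the `k`-th unit annulus contributes `O(δ∞/(b+k))`; summing gives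
the `log log R` growth.
-/

open MeasureTheory Metric Filter

/-- The mean value of `φ` over the disk `B(z₀, R)` (planar Lebesgue measure). -/
noncomputable def meanOver (z₀ : ℂ) (φ : ℂ → ℝ) (R : ℝ) : ℝ :=
  (∫ z in ball z₀ R, φ z) / (volume (ball z₀ R)).toReal

/-- The mean oscillation `(1/m(B(z₀,R))) ∫_{B(z₀,R)} |φ - φ̄_R| dm`. -/
noncomputable def meanDev (z₀ : ℂ) (φ : ℂ → ℝ) (R : ℝ) : ℝ :=
  (∫ z in ball z₀ R, |φ z - meanOver z₀ φ R|) / (volume (ball z₀ R)).toReal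

open Real Set

lemma integral_max_zero_eq_half_integral_abs {α : Type*} [MeasurableSpace α] {μ : Measure α}
    {g : α → ℝ} (hg : Integrable g μ) (h0 : ∫ x, g x ∂μ = 0) :
    ∫ x, max (g x) 0 ∂μ = (∫ x, |g x| ∂μ) / 2 := by
  have hmax : ∀ x, max (g x) 0 = (g x + |g x|) / 2 := fun x => by
    rcases le_total (g x) 0 with h | h
    · rw [max_eq_right h, abs_of_nonpos h]; ring
    · rw [max_eq_left h, abs_of_nonneg h]; ring
  simp_rw [hmax]
  rw [integral_div, integral_add hg hg.abs, h0, zero_add]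

lemma Complex.volume_ball_toReal (z₀ : ℂ) {r : ℝ} (hr : 0 ≤ r) :
    (volume (ball z₀ r)).toReal = π * r ^ 2 := by
  simp [ENNReal.toReal_ofReal hr, mul_comm]

section Mean

variable {z₀ : ℂ} {φ : ℂ → ℝ} {r : ℝ}

lemma meanOver_nonneg (hpos : ∀ z, 0 ≤ φ z) : 0 ≤ meanOver z₀ φ r :=
  div_nonneg (setIntegral_nonneg measurableSet_ball fun z _ => hpos z) ENNReal.toReal_nonneg

lemma meanDev_nonneg : 0 ≤ meanDev z₀ φ r :=
  div_nonneg (setIntegral_nonneg measurableSet_ball fun _ _ => abs_nonneg _)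
    ENNReal.toReal_nonneg

lemma integral_ball_eq_meanOver_mul (hr : 0 < r) :
    ∫ z in ball z₀ r, φ z = meanOver z₀ φ r * (π * r ^ 2) := by
  rw [meanOver, Complex.volume_ball_toReal z₀ hr.le, div_mul_cancel₀ _ (by positivity)]

lemma integral_ball_sub_meanOver (hφ : IntegrableOn φ (ball z₀ r)) (hr : 0 < r) :
    ∫ z in ball z₀ r, (φ z - meanOver z₀ φ r) = 0 := by
  rw [integral_sub hφ (integrableOn_const measure_ball_lt_top.ne), setIntegral_const,
    measureReal_def, integral_ball_eq_meanOver_mul hr, Complex.volume_ball_toReal z₀ hr.le,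
    smul_eq_mul, mul_comm, sub_self]

lemma integral_ball_max_sub_meanOver (hφ : IntegrableOn φ (ball z₀ r)) (hr : 0 < r) :
    ∫ z in ball z₀ r, max (φ z - meanOver z₀ φ r) 0 = meanDev z₀ φ r * (π * r ^ 2) / 2 := by
  rw [integral_max_zero_eq_half_integral_abs (g := fun z => φ z - meanOver z₀ φ r)
      (hφ.sub (integrableOn_const measure_ball_lt_top.ne)) (integral_ball_sub_meanOver hφ hr),
    meanDev, Complex.volume_ball_toReal z₀ hr.le, div_mul_cancel₀ _ (by positivity)]

lemma integral_ball_max_meanOver_sub (hφ : IntegrableOn φ (ball z₀ r)) (hr : 0 < r) :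
    ∫ z in ball z₀ r, max (meanOver z₀ φ r - φ z) 0 = meanDev z₀ φ r * (π * r ^ 2) / 2 := by
  have hg : IntegrableOn (fun z => meanOver z₀ φ r - φ z) (ball z₀ r) :=
    (integrableOn_const measure_ball_lt_top.ne).sub hφ
  have h0 : ∫ z in ball z₀ r, (meanOver z₀ φ r - φ z) = 0 := by
    rw [← neg_eq_zero, ← integral_neg, ← integral_ball_sub_meanOver hφ hr]
    simp only [neg_sub]
  rw [integral_max_zero_eq_half_integral_abs (g := fun z => meanOver z₀ φ r - φ z) hg h0,
    meanDev, Complex.volume_ball_toReal z₀ hr.le, div_mul_cancel₀ _ (by positivity)]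
  simp only [abs_sub_comm]

lemma meanOver_le_add_meanDev {u v : ℝ} (hφ : IntegrableOn φ (ball z₀ v)) (hu : 0 < u)
    (huv : u ≤ v) :
    meanOver z₀ φ v ≤ meanOver z₀ φ u + (v / u) ^ 2 * meanDev z₀ φ v / 2 := by
  set c := meanOver z₀ φ v
  have hball : ball z₀ u ⊆ ball z₀ v := ball_subset_ball huv
  have hc : IntegrableOn (fun z => c - φ z) (ball z₀ v) :=
    (integrableOn_const measure_ball_lt_top.ne).sub hφ
  have hgap : (c - meanOver z₀ φ u) * (π * u ^ 2) ≤ meanDev z₀ φ v * (π * v ^ 2) / 2 :=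
    calc (c - meanOver z₀ φ u) * (π * u ^ 2) = ∫ z in ball z₀ u, (c - φ z) := by
          rw [integral_sub (f := fun _ => c) (integrableOn_const measure_ball_lt_top.ne)
              (hφ.mono_set hball), setIntegral_const, measureReal_def,
            integral_ball_eq_meanOver_mul hu, Complex.volume_ball_toReal z₀ hu.le, smul_eq_mul]
          ring
      _ ≤ ∫ z in ball z₀ u, max (c - φ z) 0 :=
          integral_mono (hc.mono_set hball) (hc.mono_set hball).pos_part
            fun z => le_max_left _ _
      _ ≤ ∫ z in ball z₀ v, max (c - φ z) 0 :=
          setIntegral_mono_set hc.pos_part (Eventually.of_forall fun z => le_max_right _ _)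
            hball.eventuallyLE
      _ = meanDev z₀ φ v * (π * v ^ 2) / 2 :=
          integral_ball_max_meanOver_sub hφ (hu.trans_le huv)
  have hu2 : 0 < π * u ^ 2 := by positivity
  rw [← sub_le_iff_le_add']
  calc c - meanOver z₀ φ u ≤ meanDev z₀ φ v * (π * v ^ 2) / 2 / (π * u ^ 2) :=
        (le_div_iff₀ hu2).2 hgap
    _ = (v / u) ^ 2 * meanDev z₀ φ v / 2 := by field_simp

end Mean

lemma integral_annulus_radial (z₀ : ℂ) (F : ℝ → ℝ) {s t : ℝ} (hs : 0 ≤ s) (hst : s ≤ t) :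
    ∫ z in ball z₀ t \ ball z₀ s, F (dist z z₀) = 2 * π * ∫ r in s..t, r * F r := by
  have hind : (ball z₀ t \ ball z₀ s).indicator (fun z => F (dist z z₀))
      = fun z => (Ico s t).indicator F ‖z - z₀‖ := by
    ext z
    simp only [indicator, Set.mem_sdiff, mem_ball, not_lt, mem_Ico, dist_eq_norm, and_comm]
  have hsmul : ∀ y, y • (Ico s t).indicator F y = (Ico s t).indicator (fun r => r * F r) y := by
    intro y; simp only [indicator, smul_eq_mul]; split_ifs <;> simp
  rw [← integral_indicator (measurableSet_ball.diff measurableSet_ball), hind,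
    integral_sub_right_eq_self (fun z => (Ico s t).indicator F ‖z‖) z₀,
    integral_fun_norm_addHaar, Complex.finrank_real_complex, measureReal_def, Complex.volume_ball]
  simp only [Nat.add_one_sub_one, pow_one, hsmul]
  rw [integral_congr_ae (ae_restrict_of_ae (indicator_ae_eq_of_ae_eq_set Ico_ae_eq_Ioc)),
    integral_indicator measurableSet_Ioc, Measure.restrict_restrict measurableSet_Ioc,
    Set.inter_eq_left.2 fun y (hy : y ∈ Ioc s t) => mem_Ioi.2 (hs.trans_lt hy.1),
    ← intervalIntegral.integral_of_le hst]
  simp [NNReal.coe_real_pi]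
  ring

lemma integral_mul_one_div_mul_log_sq {u v : ℝ} (hu : 0 < u) (huv : u ≤ v) :
    ∫ r in exp u..exp v, r * (1 / (r * log r) ^ 2) = 1 / u - 1 / v := by
  have hlog : ∀ r ∈ uIcc (exp u) (exp v), 0 < r ∧ 0 < log r := fun r hr => by
    rw [uIcc_of_le (exp_le_exp.2 huv)] at hr
    have hr0 := (exp_pos u).trans_le hr.1
    exact ⟨hr0, hu.trans_le ((le_log_iff_exp_le hr0).2 hr.1)⟩
  rw [intervalIntegral.integral_eq_sub_of_hasDerivAt (f := fun r => -(log r)⁻¹), log_exp,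
    log_exp]
  · ring
  · intro r hr
    obtain ⟨hr0, hl⟩ := hlog r hr
    exact ((hasDerivAt_log hr0.ne').inv hl.ne').neg.congr_deriv (by field_simp)
  · refine ContinuousOn.intervalIntegrable fun r hr => ?_
    obtain ⟨hr0, hl⟩ := hlog r hr
    exact (continuousAt_id.mul (continuousAt_const.div
      ((continuousAt_id.mul (continuousAt_log hr0.ne')).pow 2)
      (pow_ne_zero _ (mul_pos hr0 hl).ne'))).continuousWithinAt

lemma mul_le_mul_max_sub_zero_add {x c w K : ℝ} (hw : 0 ≤ w) (hwK : w ≤ K) :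
    x * w ≤ K * max (x - c) 0 + c * w :=
  calc x * w = (x - c) * w + c * w := by ring
    _ ≤ max (x - c) 0 * K + c * w := add_le_add_left ((mul_le_mul_of_nonneg_right
        (le_max_left _ _) hw).trans (mul_le_mul_of_nonneg_left hwK (le_max_right _ _))) _
    _ = K * max (x - c) 0 + c * w := by ring

section Weight

variable {z₀ : ℂ} {u v : ℝ}

lemma integral_annulus_one_div_mul_log_sq (z₀ : ℂ) (hu : 0 < u) (huv : u ≤ v) :
    ∫ z in ball z₀ (exp v) \ ball z₀ (exp u), 1 / (dist z z₀ * log (dist z z₀)) ^ 2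
      = 2 * π * (1 / u - 1 / v) := by
  rw [integral_annulus_radial z₀ (fun r => 1 / (r * log r) ^ 2) (exp_pos u).le
    (exp_le_exp.2 huv), integral_mul_one_div_mul_log_sq hu huv]

lemma one_div_mul_log_sq_le {r : ℝ} (hu : 0 < u) (hr : exp u ≤ r) :
    1 / (r * log r) ^ 2 ≤ 1 / (exp u * u) ^ 2 := by
  have hr0 := (exp_pos u).trans_le hr
  have hlog : u ≤ log r := (le_log_iff_exp_le hr0).2 hr
  gcongr

lemma le_dist_of_mem_annulus {z : ℂ} (hz : z ∈ ball z₀ v \ ball z₀ u) : u ≤ dist z z₀ :=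
  not_lt.1 hz.2

lemma integrableOn_annulus_div_mul_log_sq {φ : ℂ → ℝ} (hφ : IntegrableOn φ (ball z₀ (exp v)))
    (hu : 0 < u) :
    IntegrableOn (fun z => φ z / (dist z z₀ * log (dist z z₀)) ^ 2)
      (ball z₀ (exp v) \ ball z₀ (exp u)) := by
  have hφA := hφ.mono_set (sdiff_subset (t := ball z₀ (exp u)))
  refine Integrable.mono' (hφA.norm.const_mul (1 / (exp u * u) ^ 2))
    (hφA.aestronglyMeasurable.div₀ (by fun_prop)) ?_
  refine ae_restrict_of_forall_mem (measurableSet_ball.diff measurableSet_ball) fun z hz => ?_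
  rw [norm_div, Real.norm_of_nonneg (sq_nonneg _), div_eq_mul_one_div, mul_comm]
  exact mul_le_mul_of_nonneg_right
    (one_div_mul_log_sq_le hu (le_dist_of_mem_annulus hz)) (norm_nonneg _)

lemma integral_annulus_div_mul_log_sq_le {φ : ℂ → ℝ} (hφ : IntegrableOn φ (ball z₀ (exp v)))
    (hu : 0 < u) (huv : u ≤ v) :
    ∫ z in ball z₀ (exp v) \ ball z₀ (exp u), φ z / (dist z z₀ * log (dist z z₀)) ^ 2
      ≤ π * exp (v - u) ^ 2 / (2 * u ^ 2) * meanDev z₀ φ (exp v)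
        + 2 * π * (1 / u - 1 / v) * meanOver z₀ φ (exp v) := by
  set c := meanOver z₀ φ (exp v)
  have hA : MeasurableSet (ball z₀ (exp v) \ ball z₀ (exp u)) :=
    measurableSet_ball.diff measurableSet_ball
  have hmax : IntegrableOn (fun z => max (φ z - c) 0) (ball z₀ (exp v)) :=
    (hφ.sub (integrableOn_const measure_ball_lt_top.ne)).pos_part
  have hweight : IntegrableOn (fun z => 1 / (dist z z₀ * log (dist z z₀)) ^ 2)
      (ball z₀ (exp v) \ ball z₀ (exp u)) :=
    integrableOn_annulus_div_mul_log_sq (integrableOn_const measure_ball_lt_top.ne) hu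
  have hbound : IntegrableOn (fun z => 1 / (exp u * u) ^ 2 * max (φ z - c) 0
      + c * (1 / (dist z z₀ * log (dist z z₀)) ^ 2)) (ball z₀ (exp v) \ ball z₀ (exp u)) :=
    ((hmax.mono_set sdiff_subset).const_mul _).add (hweight.const_mul c)
  have hsplit : ∀ z ∈ ball z₀ (exp v) \ ball z₀ (exp u),
      φ z / (dist z z₀ * log (dist z z₀)) ^ 2
        ≤ 1 / (exp u * u) ^ 2 * max (φ z - c) 0 + c * (1 / (dist z z₀ * log (dist z z₀)) ^ 2) :=
    fun z hz => (div_eq_mul_one_div _ _).trans_le (mul_le_mul_max_sub_zero_add (by positivity)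
      (one_div_mul_log_sq_le hu (le_dist_of_mem_annulus hz)))
  have hosc : ∫ z in ball z₀ (exp v) \ ball z₀ (exp u), max (φ z - c) 0
      ≤ meanDev z₀ φ (exp v) * (π * exp v ^ 2) / 2 := by
    rw [← integral_ball_max_sub_meanOver hφ (exp_pos v)]
    exact setIntegral_mono_set hmax (Eventually.of_forall fun z => le_max_right _ _)
      sdiff_subset.eventuallyLE
  calc ∫ z in ball z₀ (exp v) \ ball z₀ (exp u), φ z / (dist z z₀ * log (dist z z₀)) ^ 2
      ≤ ∫ z in ball z₀ (exp v) \ ball z₀ (exp u), (1 / (exp u * u) ^ 2 * max (φ z - c) 0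
          + c * (1 / (dist z z₀ * log (dist z z₀)) ^ 2)) :=
        setIntegral_mono_on (integrableOn_annulus_div_mul_log_sq hφ hu) hbound hA hsplit
    _ = 1 / (exp u * u) ^ 2 * (∫ z in ball z₀ (exp v) \ ball z₀ (exp u), max (φ z - c) 0)
          + c * (2 * π * (1 / u - 1 / v)) := by
        rw [integral_add ((hmax.mono_set sdiff_subset).const_mul _) (hweight.const_mul c),
          integral_const_mul, integral_const_mul,
          integral_annulus_one_div_mul_log_sq z₀ hu huv]
    _ ≤ 1 / (exp u * u) ^ 2 * (meanDev z₀ φ (exp v) * (π * exp v ^ 2) / 2)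
          + c * (2 * π * (1 / u - 1 / v)) := by
        gcongr
    _ = _ := by
        rw [exp_sub]
        field_simp

end Weight

lemma integral_annulus_add {z₀ : ℂ} {f : ℂ → ℝ} {r s t : ℝ} (hrs : r ≤ s) (hst : s ≤ t)
    (hsr : IntegrableOn f (ball z₀ s \ ball z₀ r)) (hts : IntegrableOn f (ball z₀ t \ ball z₀ s)) :
    ∫ z in ball z₀ t \ ball z₀ r, f z
      = (∫ z in ball z₀ s \ ball z₀ r, f z) + ∫ z in ball z₀ t \ ball z₀ s, f z := by
  rw [← Set.sdiff_union_sdiff_cancel (ball_subset_ball hst) (ball_subset_ball hrs), union_comm,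
    setIntegral_union _ (measurableSet_ball.diff measurableSet_ball) hsr hts]
  exact disjoint_sdiff_right.mono_left sdiff_subset

/-- In units of `π e² δ∞`, the cost of the annuli `e ≤ |z - z₀| < e^(b+n)`: the first summand is
that of `e ≤ |z - z₀| < e^b`, the `k`-th term that of `e^(b+k) ≤ |z - z₀| < e^(b+k+1)`
(oscillation part, then mean part, with `e² (e^(2(b-2)) + k + 1) δ∞/2` bounding the growth of the
mean from `B(z₀, e)` to `B(z₀, e^(b+k+1))`). -/
noncomputable def gridBound (b : ℝ) (n : ℕ) : ℝ :=
  exp (b - 2) ^ 2 * (3 / 2 - 1 / b) + ∑ k ∈ Finset.range n,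
    (1 / (2 * (b + k) ^ 2) + (exp (b - 2) ^ 2 + k + 1) * (1 / (b + k) - 1 / (b + k + 1)))

lemma gridBound_succ (b : ℝ) (n : ℕ) :
    gridBound b (n + 1) = gridBound b n
      + (1 / (2 * (b + n) ^ 2) + (exp (b - 2) ^ 2 + n + 1) * (1 / (b + n) - 1 / (b + n + 1))) := by
  rw [gridBound, gridBound, Finset.sum_range_succ, add_assoc]
  ring

section Grid

variable {z₀ : ℂ} {φ : ℂ → ℝ} {δ b : ℝ}
  (hInt : ∀ R > 0, IntegrableOn φ (ball z₀ R))
  (hdev : ∀ v, exp 1 < v → meanDev z₀ φ (exp v) ≤ δ)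
include hInt hdev

lemma meanOver_exp_add_nat_le (hb : exp 1 < b) (n : ℕ) :
    meanOver z₀ φ (exp (b + n))
      ≤ meanOver z₀ φ (exp 1) + exp 1 ^ 2 * (exp (b - 2) ^ 2 + n) * δ / 2 := by
  have hb1 : 1 ≤ b := (one_lt_exp_iff.2 one_pos |>.trans hb).le
  induction n with
  | zero =>
    have hstep := meanOver_le_add_meanDev (hInt _ (exp_pos b)) (exp_pos 1) (exp_le_exp.2 hb1)
    have hratio : (exp b / exp 1) ^ 2 = exp 1 ^ 2 * exp (b - 2) ^ 2 := by
      rw [← exp_sub, ← mul_pow, ← exp_add]; ring_nf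
    rw [hratio] at hstep
    have := mul_le_mul_of_nonneg_left (hdev b hb)
      (by positivity : 0 ≤ exp 1 ^ 2 * exp (b - 2) ^ 2)
    rw [Nat.cast_zero, add_zero, add_zero]
    linarith
  | succ n ih =>
    have hstep := meanOver_le_add_meanDev (hInt _ (exp_pos (b + (n + 1)))) (exp_pos (b + n))
      (exp_le_exp.2 (by linarith))
    have hratio : (exp (b + (n + 1)) / exp (b + n)) ^ 2 = exp 1 ^ 2 := by
      rw [← exp_sub]; ring_nf
    rw [hratio] at hstep
    have := mul_le_mul_of_nonneg_left (hdev (b + (n + 1)) (by linarith [n.cast_nonneg (α := ℝ)]))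
      (by positivity : 0 ≤ exp 1 ^ 2)
    push_cast
    linarith

lemma integral_annulus_exp_add_nat_succ_le (hb : exp 1 < b) (n : ℕ) :
    ∫ z in ball z₀ (exp (b + (n + 1))) \ ball z₀ (exp (b + n)),
        φ z / (dist z z₀ * log (dist z z₀)) ^ 2
      ≤ 2 * π * (1 / (b + n) - 1 / (b + n + 1)) * meanOver z₀ φ (exp 1)
        + π * exp 1 ^ 2 * δ * (1 / (2 * (b + n) ^ 2)
          + (exp (b - 2) ^ 2 + n + 1) * (1 / (b + n) - 1 / (b + n + 1))) := by
  have hn : 0 < b + n := by linarith [n.cast_nonneg (α := ℝ), exp_pos 1]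
  have hann := integral_annulus_div_mul_log_sq_le (z₀ := z₀) (hInt _ (exp_pos (b + (n + 1))))
    hn (by linarith : b + n ≤ b + (n + 1))
  have hdev' := mul_le_mul_of_nonneg_left (hdev (b + (n + 1)) (by linarith))
    (by positivity : 0 ≤ π * exp (b + (n + 1) - (b + n)) ^ 2 / (2 * (b + n) ^ 2))
  have hmean := mul_le_mul_of_nonneg_left (meanOver_exp_add_nat_le hInt hdev hb (n + 1))
    (mul_nonneg (by positivity : (0 : ℝ) ≤ 2 * π)
      (sub_nonneg.2 (one_div_le_one_div_of_le hn (by linarith : b + n ≤ b + (n + 1)))))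
  rw [show b + (n + 1) - (b + n) = 1 by ring] at hann hdev'
  push_cast at hmean
  refine (hann.trans (add_le_add hdev' hmean)).trans_eq ?_
  ring

lemma integral_annulus_exp_add_nat_le_gridBound (hb : exp 1 < b) (n : ℕ) :
    ∫ z in ball z₀ (exp (b + n)) \ ball z₀ (exp 1), φ z / (dist z z₀ * log (dist z z₀)) ^ 2
      ≤ 2 * π * (1 - 1 / (b + n)) * meanOver z₀ φ (exp 1)
        + π * exp 1 ^ 2 * δ * gridBound b n := by
  have hb1 : 1 ≤ b := (one_lt_exp_iff.2 one_pos |>.trans hb).le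
  induction n with
  | zero =>
    have hann := integral_annulus_div_mul_log_sq_le (z₀ := z₀) (hInt _ (exp_pos b)) one_pos hb1
    have hdev' := mul_le_mul_of_nonneg_left (hdev b hb)
      (by positivity : 0 ≤ π * exp (b - 1) ^ 2 / (2 * 1 ^ 2))
    have hmean := mul_le_mul_of_nonneg_left (meanOver_exp_add_nat_le hInt hdev hb 0)
      (mul_nonneg (by positivity : (0 : ℝ) ≤ 2 * π)
        (sub_nonneg.2 (one_div_le_one_div_of_le one_pos hb1)))
    rw [Nat.cast_zero, add_zero] at hmean ⊢
    refine (hann.trans (add_le_add hdev' hmean)).trans_eq ?_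
    rw [gridBound, Finset.sum_range_zero, add_zero,
      show exp (b - 1) = exp 1 * exp (b - 2) by rw [← exp_add]; ring_nf]
    ring
  | succ n ih =>
    have hn : 1 ≤ b + n := by linarith [n.cast_nonneg (α := ℝ)]
    push_cast
    rw [integral_annulus_add (exp_le_exp.2 hn) (exp_le_exp.2 (by linarith))
      (integrableOn_annulus_div_mul_log_sq (hInt _ (exp_pos _)) one_pos)
      (integrableOn_annulus_div_mul_log_sq (hInt _ (exp_pos _)) (by linarith))]
    refine (add_le_add ih (integral_annulus_exp_add_nat_succ_le hInt hdev hb n)).trans_eq ?_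
    rw [gridBound_succ]
    ring

end Grid

lemma exp_eighteen_div_twentyFive_sq_lt : exp (18 / 25) ^ 2 < 43 / 10 := by
  have hpow : (exp (18 / 25) ^ 2) ^ 25 = exp 1 ^ 36 := by
    rw [← pow_mul, ← exp_nat_mul, ← exp_nat_mul]; norm_num
  refine lt_of_pow_lt_pow_left₀ 25 (by norm_num) ?_
  rw [hpow]
  calc exp 1 ^ 36 < 2.7182818286 ^ 36 := by gcongr; exact exp_one_lt_d9
    _ ≤ (43 / 10) ^ 25 := by norm_num

lemma one_div_le_log_sub_log_sub_one {x : ℝ} (hx : 1 < x) : 1 / x ≤ log x - log (x - 1) := by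
  have h := log_le_sub_one_of_pos (x := (x - 1) / x) (by apply div_pos <;> linarith)
  rw [log_div (by linarith) (by linarith)] at h
  have : (x - 1) / x - 1 = -(1 / x) := by field_simp; ring
  linarith

lemma gridBound_le (n : ℕ) :
    gridBound (68 / 25) (n + 1) ≤ (4 + π ^ 2 / 6) * (1 + log (68 / 25 + n) - log (68 / 25)) := by
  have hq : exp (68 / 25 - 2) ^ 2 < 43 / 10 := by
    norm_num [exp_eighteen_div_twentyFive_sq_lt]
  have hK : 3 ≤ 4 + π ^ 2 / 6 := by linarith [sq_nonneg π]
  induction n with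
  | zero =>
    -- the tight case: the first two annuli cost about `5.46 < 4 + π²/6`, which is why `b` must
    -- be taken so close to `e`
    simp only [gridBound, zero_add, Finset.sum_range_one, Nat.cast_zero, add_zero]
    nlinarith [exp_pos (68 / 25 - 2), pi_gt_d2]
  | succ n ih =>
    set x : ℝ := 68 / 25 + ((n : ℝ) + 1) with hxdef
    have hx : 1 < x := by linarith [n.cast_nonneg (α := ℝ)]
    have hterm : 1 / (2 * x ^ 2) + (exp (68 / 25 - 2) ^ 2 + (n + 1) + 1) * (1 / x - 1 / (x + 1))
        ≤ 3 * (1 / x) := by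
      have h1 : 1 / (2 * x) ≤ 1 := by rw [div_le_one (by positivity)]; linarith
      have h2 : (exp (68 / 25 - 2) ^ 2 + (n + 1) + 1) / (x + 1) ≤ 2 := by
        rw [div_le_iff₀ (by positivity)]; linarith
      calc _ = (1 / (2 * x) + (exp (68 / 25 - 2) ^ 2 + (n + 1) + 1) / (x + 1)) * (1 / x) := by
            field_simp; ring
        _ ≤ 3 * (1 / x) := by gcongr; linarith
    have hlog := one_div_le_log_sub_log_sub_one hx
    rw [show x - 1 = 68 / 25 + n by rw [hxdef]; ring] at hlog
    rw [gridBound_succ]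
    push_cast
    calc _ ≤ (4 + π ^ 2 / 6) * (1 + log (68 / 25 + n) - log (68 / 25))
          + (4 + π ^ 2 / 6) * (log x - log (68 / 25 + n)) :=
          add_le_add ih (hterm.trans (mul_le_mul hK hlog (by positivity) (by positivity)))
      _ = _ := by ring

lemma exists_nat_le_exp_and_log_le {b R : ℝ} (hb : exp 1 ≤ b) (hR : exp (exp 1) < R) :
    ∃ n : ℕ, R ≤ exp (b + (n + 1 : ℕ)) ∧ 1 + log (b + n) - log b ≤ log (log R) := by
  have hR0 : 0 < R := (exp_pos _).trans hR
  have hlogR : exp 1 < log R := (lt_log_iff_exp_lt hR0).2 hR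
  have hb0 : 0 < b := (exp_pos 1).trans_le hb
  have hlogb : 1 ≤ log b := (le_log_iff_exp_le hb0).2 hb
  refine ⟨⌊log R - b⌋₊, ?_, ?_⟩
  · calc R = exp (log R) := (exp_log hR0).symm
      _ ≤ _ := by
        rw [exp_le_exp]
        push_cast
        linarith [Nat.lt_floor_add_one (log R - b)]
  · rcases Nat.eq_zero_or_pos ⌊log R - b⌋₊ with h | h
    · rw [h, Nat.cast_zero, add_zero, add_sub_cancel_right]
      exact ((lt_log_iff_exp_lt ((exp_pos 1).trans hlogR)).2 hlogR).le
    · have hle : b + ⌊log R - b⌋₊ ≤ log R := by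
        linarith [Nat.floor_le (zero_le_one.trans (Nat.floor_pos.1 h))]
      have := log_le_log (by positivity) hle
      linarith

lemma grid_estimate_le_const_mul {φ₀ δ s G L : ℝ} (hφ₀ : 0 ≤ φ₀) (hδ : 0 ≤ δ) (hs : 0 ≤ s)
    (hL : 1 ≤ L) (hG : G ≤ (4 + π ^ 2 / 6) * L) :
    2 * π * (1 - s) * φ₀ + π * exp 1 ^ 2 * δ * G
      ≤ (π / 6 * ((24 + π ^ 2) * exp 1 ^ 2 * δ + 2 * π ^ 2 * φ₀)) * L := by
  have hπ : 6 ≤ π ^ 2 * L := by nlinarith [pi_gt_three]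
  have hφ₀L : 2 * π * (1 - s) * φ₀ ≤ π / 6 * (2 * π ^ 2 * φ₀) * L := by
    nlinarith [mul_nonneg pi_pos.le hφ₀, mul_nonneg (mul_nonneg pi_pos.le hφ₀) hs]
  calc 2 * π * (1 - s) * φ₀ + π * exp 1 ^ 2 * δ * G
      ≤ π / 6 * (2 * π ^ 2 * φ₀) * L + π * exp 1 ^ 2 * δ * ((4 + π ^ 2 / 6) * L) :=
        add_le_add hφ₀L (mul_le_mul_of_nonneg_left hG (by positivity))
    _ = _ := by ring

/-- Lemma 2: if `φ ≥ 0` is integrable on balls and has global finite mean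
oscillation at `z₀` with maximal dispersion `δ∞` (the supremum of the averaged
deviations over `R > e^e`), then for `R > e^e`,
`∫_{A(z₀,e,R)} φ/(|z-z₀| log|z-z₀|)² dm ≤ C log log R` with
`C = (π/6)((24+π²)e²δ∞ + 2π²φ₀)`, `φ₀` the mean of `φ` over `B(z₀,e)`. -/
theorem statement4 (z₀ : ℂ) (φ : ℂ → ℝ) (hpos : ∀ z, 0 ≤ φ z)
    (hInt : ∀ R > 0, IntegrableOn φ (ball z₀ R) volume)
    (δ : ℝ)
    (hδ : IsLUB (meanDev z₀ φ '' Set.Ioi (Real.exp (Real.exp 1))) δ) :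
    ∀ R > Real.exp (Real.exp 1),
      (∫ z in ball z₀ R \ closedBall z₀ (Real.exp 1),
          φ z / (dist z z₀ * Real.log (dist z z₀)) ^ 2) ≤
        (Real.pi / 6 * ((24 + Real.pi ^ 2) * Real.exp 1 ^ 2 * δ
            + 2 * Real.pi ^ 2 * meanOver z₀ φ (Real.exp 1))) * Real.log (Real.log R) := by
  intro R hR
  have hb : exp 1 < 68 / 25 := exp_one_lt_d9.trans (by norm_num)
  have hdev : ∀ v, exp 1 < v → meanDev z₀ φ (exp v) ≤ δ := fun v hv =>
    hδ.1 ⟨exp v, exp_lt_exp.2 hv, rfl⟩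
  obtain ⟨n, hRn, hlog⟩ := exists_nat_le_exp_and_log_le hb.le hR
  have hlog1 : 1 ≤ log (log R) := by
    have := log_le_log (by norm_num) (le_add_of_nonneg_right n.cast_nonneg :
      (68 / 25 : ℝ) ≤ 68 / 25 + n)
    linarith
  calc ∫ z in ball z₀ R \ closedBall z₀ (exp 1), φ z / (dist z z₀ * log (dist z z₀)) ^ 2
      ≤ ∫ z in ball z₀ (exp (68 / 25 + (n + 1 : ℕ))) \ ball z₀ (exp 1),
          φ z / (dist z z₀ * log (dist z z₀)) ^ 2 :=
        setIntegral_mono_set (integrableOn_annulus_div_mul_log_sq (hInt _ (exp_pos _)) one_pos)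
          (Eventually.of_forall fun z => div_nonneg (hpos z) (sq_nonneg _))
          (sdiff_subset_sdiff (ball_subset_ball hRn) ball_subset_closedBall).eventuallyLE
    _ ≤ 2 * π * (1 - 1 / (68 / 25 + (n + 1 : ℕ))) * meanOver z₀ φ (exp 1)
          + π * exp 1 ^ 2 * δ * gridBound (68 / 25) (n + 1) :=
        integral_annulus_exp_add_nat_le_gridBound hInt hdev hb (n + 1)
    _ ≤ _ :=
        grid_estimate_le_const_mul (meanOver_nonneg hpos) (meanDev_nonneg.trans (hdev _ hb))
          (by positivity) hlog1
          ((gridBound_le n).trans (mul_le_mul_of_nonneg_left hlog (by positivity)))
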